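/- (Theorem 3.1) For all integers N ≥ 3 and M ≥ 3, the block bi-diagonal Toeplitz matrix P_W is nonsingular (invertible). -/

import Mathlib

open scoped Matrix

/-- The coefficients `g_k^{(β)}`. -/
noncomputable def gcoef (β : ℝ) : ℕ → ℝ
  | 0 => 1
  | k + 1 => (1 - (β + 1) / ((k : ℝ) + 1)) * gcoef β k

/-- The WSGD coefficients `ω_k^{(β)}`. -/
noncomputable def w (β : ℝ) : ℕ → ℝ
  | 0 => β / 2 * gcoef β 0
  | k + 1 => β / 2 * gcoef β (k + 1) + (2 - β) / 2 * gcoef β k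
/-- The `(N−1) × (N−1)` lower Hessenberg Toeplitz matrix `G_β`
(1-based entry `(i,j)` equals `ω_{i−j+1}` when `i − j + 1 ≥ 0`, else `0`). -/
noncomputable def Gmat (β : ℝ) (N : ℕ) : Matrix (Fin (N - 1)) (Fin (N - 1)) ℝ :=
  Matrix.of fun i j => if (j : ℕ) ≤ (i : ℕ) + 1 then w β ((i : ℕ) + 1 - (j : ℕ)) else 0

/-- `K_N = e₁·G_β + e₂·G_βᵀ`. -/
noncomputable def Kmat (β e1 e2 : ℝ) (N : ℕ) : Matrix (Fin (N - 1)) (Fin (N - 1)) ℝ :=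
  e1 • Gmat β N + e2 • (Gmat β N)ᵀ
/-- `c_0^{(α,σ)} = τ^{−α}·σ^{1−α}/Γ(2−α)` with `σ = 1 − α/2`. -/
noncomputable def c0 (α τ : ℝ) : ℝ :=
  τ ^ (-α) * (1 - α / 2) ^ (1 - α) / Real.Gamma (2 - α)

/-- `A_0 = h^β·c_0^{(α,σ)}·I − σ·K_N` with `σ = 1 − α/2`. -/
noncomputable def A0mat (β α h τ e1 e2 : ℝ) (N : ℕ) :
    Matrix (Fin (N - 1)) (Fin (N - 1)) ℝ :=
  (h ^ β * c0 α τ) • (1 : Matrix (Fin (N - 1)) (Fin (N - 1)) ℝ) -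
    (1 - α / 2) • Kmat β e1 e2 N
/-- `a_l^{(α,σ)}` with `σ = 1 − α/2`. -/
noncomputable def acoef (α : ℝ) (l : ℕ) : ℝ :=
  ((l : ℝ) + (1 - α / 2)) ^ (1 - α) - ((l : ℝ) - 1 + (1 - α / 2)) ^ (1 - α)

/-- `b_l^{(α,σ)}` with `σ = 1 − α/2`. -/
noncomputable def bcoef (α : ℝ) (l : ℕ) : ℝ :=
  (1 / (2 - α)) * (((l : ℝ) + (1 - α / 2)) ^ (2 - α) - ((l : ℝ) - 1 + (1 - α / 2)) ^ (2 - α)) -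
    (1 / 2) * (((l : ℝ) + (1 - α / 2)) ^ (1 - α) - ((l : ℝ) - 1 + (1 - α / 2)) ^ (1 - α))

/-- `c_k^{(α,σ)}`. -/
noncomputable def ccoef (α τ : ℝ) : ℕ → ℝ
  | 0 => c0 α τ
  | k + 1 => τ ^ (-α) / Real.Gamma (2 - α) *
      (acoef α (k + 1) + bcoef α (k + 2) - bcoef α (k + 1))

/-- `A_1 = h^β·(c_1 − c_0)·I − (1 − σ)·K_N` with `σ = 1 − α/2`. -/
noncomputable def A1mat (β α h τ e1 e2 : ℝ) (N : ℕ) :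
    Matrix (Fin (N - 1)) (Fin (N - 1)) ℝ :=
  (h ^ β * (ccoef α τ 1 - ccoef α τ 0)) • (1 : Matrix (Fin (N - 1)) (Fin (N - 1)) ℝ) -
    (1 - (1 - α / 2)) • Kmat β e1 e2 N

/-- The blocks `A_k` of the block lower triangular Toeplitz matrix `W`:
`A_0`, `A_1` as above, and `A_k = h^β(c_k − c_{k−1})·I` for `k ≥ 2`. -/
noncomputable def Ablk (β α h τ e1 e2 : ℝ) (N : ℕ) (k : ℕ) :
    Matrix (Fin (N - 1)) (Fin (N - 1)) ℝ :=
  if k = 0 then A0mat β α h τ e1 e2 N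
  else if k = 1 then A1mat β α h τ e1 e2 N
  else (h ^ β * (ccoef α τ k - ccoef α τ (k - 1))) • (1 : Matrix (Fin (N - 1)) (Fin (N - 1)) ℝ)

/-- The block lower triangular block-Toeplitz matrix `W`
whose `(i,j)` block equals `A_{i−j}` for `i ≥ j` and `0` for `i < j`. -/
noncomputable def Wmat (β α h τ e1 e2 : ℝ) (M N : ℕ) :
    Matrix (Fin (M - 1) × Fin (N - 1)) (Fin (M - 1) × Fin (N - 1)) ℝ :=
  Matrix.of fun p q =>
    if (q.1 : ℕ) ≤ (p.1 : ℕ) then Ablk β α h τ e1 e2 N ((p.1 : ℕ) - (q.1 : ℕ)) p.2 q.2 else 0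

/-- The block lower bidiagonal Toeplitz preconditioner `P_W`
with diagonal blocks `A_0` and first subdiagonal blocks `A_1`. -/
noncomputable def PWmat (β α h τ e1 e2 : ℝ) (M N : ℕ) :
    Matrix (Fin (M - 1) × Fin (N - 1)) (Fin (M - 1) × Fin (N - 1)) ℝ :=
  Matrix.of fun p q =>
    if (p.1 : ℕ) = (q.1 : ℕ) then A0mat β α h τ e1 e2 N p.2 q.2
    else if (p.1 : ℕ) = (q.1 : ℕ) + 1 then A1mat β α h τ e1 e2 N p.2 q.2
    else 0

/-!
`P_W` is block lower triangular with every diagonal block equal to `A_0`, so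
`det P_W = (det A_0)^(M-1)` and it suffices that `A_0` is invertible. The symmetric part
`A_0 + A_0ᵀ = 2 h^β c_0 I - σ (e_1 + e_2) (G_β + G_βᵀ)` is positive definite: `G_β + G_βᵀ` is a
symmetric Toeplitz matrix with nonnegative off-diagonal entries (`ω_0 + ω_2 ≥ 0`, `ω_k ≥ 0` for
`k ≥ 3`) and nonpositive row sums (the partial sums `∑_{k ≤ n} ω_k` are `≤ 0` for `n ≥ 2`), so by
Gershgorin every eigenvalue of the symmetric part is positive. A real matrix with positive
definite symmetric part has trivial kernel.
-/

open Finset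

section Coefficients

variable {β : ℝ}

lemma gcoef_zero : gcoef β 0 = 1 := rfl

lemma gcoef_one : gcoef β 1 = -β := by
  simp [gcoef]

lemma gcoef_two : gcoef β 2 = β * (β - 1) / 2 := by
  simp only [gcoef]
  norm_num
  ring

lemma gcoef_pos (hβ1 : 1 < β) (hβ2 : β < 2) {k : ℕ} (hk : 2 ≤ k) : 0 < gcoef β k := by
  induction k, hk using Nat.le_induction with
  | base => rw [gcoef_two]; nlinarith
  | succ k hk ih =>
    have hk' : (2 : ℝ) ≤ k := by exact_mod_cast hk
    have hfactor : 0 < 1 - (β + 1) / ((k : ℝ) + 1) := by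
      rw [sub_pos, div_lt_one (by linarith)]
      linarith
    exact mul_pos hfactor ih

lemma natCast_sub_mul_gcoef (n : ℕ) :
    ((n : ℝ) - β) * gcoef β n = -β * ∑ k ∈ range (n + 1), gcoef β k := by
  induction n with
  | zero => simp [gcoef_zero]
  | succ n ih =>
    rw [sum_range_succ, mul_add, ← ih, gcoef]
    field_simp
    push_cast
    ring

lemma sum_range_gcoef_neg (hβ1 : 1 < β) (hβ2 : β < 2) {n : ℕ} (hn : 1 ≤ n) :
    ∑ k ∈ range (n + 1), gcoef β k < 0 := by
  obtain rfl | hn2 := hn.eq_or_lt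
  · rw [sum_range_succ, sum_range_one, gcoef_zero, gcoef_one]
    linarith
  · have hn' : (2 : ℝ) ≤ n := by exact_mod_cast hn2
    nlinarith [natCast_sub_mul_gcoef (β := β) n, gcoef_pos hβ1 hβ2 hn2]

lemma sum_range_w (n : ℕ) :
    ∑ k ∈ range (n + 1), w β k
      = β / 2 * ∑ k ∈ range (n + 1), gcoef β k + (2 - β) / 2 * ∑ k ∈ range n, gcoef β k := by
  induction n with
  | zero => simp [w]
  | succ n ih =>
    rw [sum_range_succ, ih, w, sum_range_succ _ (n + 1), sum_range_succ _ n]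
    ring

lemma w_one : w β 1 = -((β + 2) * (β - 1)) / 2 := by
  rw [show w β 1 = β / 2 * gcoef β 1 + (2 - β) / 2 * gcoef β 0 from rfl, gcoef_one, gcoef_zero]
  ring

lemma w_zero_add_w_two : w β 0 + w β 2 = β * (β + 2) * (β - 1) / 4 := by
  rw [show w β 2 = β / 2 * gcoef β 2 + (2 - β) / 2 * gcoef β 1 from rfl, w, gcoef_two,
    gcoef_one, gcoef_zero]
  ring

lemma w_one_neg (hβ1 : 1 < β) : w β 1 < 0 := by
  rw [w_one]
  nlinarith

lemma w_zero_add_w_two_nonneg (hβ1 : 1 < β) : 0 ≤ w β 0 + w β 2 := by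
  rw [w_zero_add_w_two]
  have : 0 ≤ β * (β + 2) * (β - 1) := by
    apply mul_nonneg (mul_nonneg _ _) _ <;> linarith
  linarith

lemma w_nonneg (hβ1 : 1 < β) (hβ2 : β < 2) {k : ℕ} (hk : 3 ≤ k) : 0 ≤ w β k := by
  obtain ⟨k, rfl⟩ := Nat.exists_eq_add_of_le' hk
  have h1 := gcoef_pos hβ1 hβ2 (k := k + 3) (by omega)
  have h2 := gcoef_pos hβ1 hβ2 (k := k + 2) (by omega)
  simp only [w]
  nlinarith

lemma sum_range_w_nonpos (hβ1 : 1 < β) (hβ2 : β < 2) {n : ℕ} (hn : 2 ≤ n) :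
    ∑ k ∈ range (n + 1), w β k ≤ 0 := by
  obtain ⟨n, rfl⟩ := Nat.exists_eq_add_of_le' (show 1 ≤ n by omega)
  rw [sum_range_w]
  have h1 := sum_range_gcoef_neg hβ1 hβ2 (n := n + 1) (by omega)
  have h2 := sum_range_gcoef_neg hβ1 hβ2 (n := n) (by omega)
  nlinarith

end Coefficients

lemma Finset.sum_range_natDist {M : Type*} [AddCommMonoid M] (f : ℕ → M) {i n : ℕ} (hi : i ≤ n) :
    ∑ j ∈ range n, f (Nat.dist i j) = ∑ d ∈ range i, f (d + 1) + ∑ d ∈ range (n - i), f d := by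
  rw [← sum_range_add_sum_Ico _ hi, sum_Ico_eq_sum_range, ← sum_range_reflect]
  congr 1 <;> refine sum_congr rfl fun d hd => congrArg f ?_ <;>
    simp only [mem_range] at hd <;> simp only [Nat.dist] <;> omega

/-- The entry of `G_β + G_βᵀ` at distance `d` from the diagonal. -/
noncomputable def wsym (β : ℝ) (d : ℕ) : ℝ :=
  w β (d + 1) + if d ≤ 1 then w β (1 - d) else 0

section SymmetricCoefficients

variable {β : ℝ}

lemma wsym_zero : wsym β 0 = 2 * w β 1 := by
  simp only [wsym]
  norm_num
  ring

lemma wsym_succ (d : ℕ) : wsym β (d + 1) = w β (d + 2) + if d = 0 then w β 0 else 0 := by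
  simp only [wsym]
  split_ifs <;> first | omega | (subst_vars; rfl)

lemma wsym_nonneg (hβ1 : 1 < β) (hβ2 : β < 2) {d : ℕ} (hd : 1 ≤ d) : 0 ≤ wsym β d := by
  obtain ⟨d, rfl⟩ := Nat.exists_eq_add_of_le' hd
  rw [wsym_succ]
  split_ifs with h
  · subst h
    linarith [w_zero_add_w_two_nonneg hβ1]
  · simpa using w_nonneg hβ1 hβ2 (k := d + 2) (by omega)

lemma sum_range_wsym_succ_le (hβ1 : 1 < β) (hβ2 : β < 2) (m : ℕ) :
    ∑ d ∈ range m, wsym β (d + 1) ≤ -w β 1 := by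
  rcases m with _ | m
  · simpa using (w_one_neg hβ1).le
  · have hsplit : ∑ d ∈ range (m + 1), wsym β (d + 1) = ∑ k ∈ range (m + 3), w β k - w β 1 := by
      simp only [wsym_succ, sum_add_distrib, sum_ite_eq', mem_range, Nat.zero_lt_succ, if_true]
      rw [sum_range_succ' _ (m + 2), sum_range_succ' _ (m + 1)]
      ring
    linarith [sum_range_w_nonpos hβ1 hβ2 (n := m + 2) (by omega)]

lemma sum_range_wsym_natDist_nonpos (hβ1 : 1 < β) (hβ2 : β < 2) {i n : ℕ} (hi : i < n) :
    ∑ j ∈ range n, wsym β (Nat.dist i j) ≤ 0 := by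
  obtain ⟨m, hm⟩ : ∃ m, n - i = m + 1 := ⟨n - i - 1, by omega⟩
  rw [sum_range_natDist _ hi.le, hm, sum_range_succ', wsym_zero]
  linarith [sum_range_wsym_succ_le hβ1 hβ2 i, sum_range_wsym_succ_le hβ1 hβ2 m]

end SymmetricCoefficients

lemma Gmat_add_transpose_apply (β : ℝ) (N : ℕ) (i j : Fin (N - 1)) :
    (Gmat β N + (Gmat β N)ᵀ) i j = wsym β (Nat.dist i j) := by
  simp only [Matrix.add_apply, Matrix.transpose_apply, Gmat, Matrix.of_apply]
  rcases le_total (j : ℕ) i with h | h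
  · rw [Nat.dist_eq_sub_of_le_right h, if_pos (by omega), wsym, Nat.sub_add_comm h]
    congr 1
    split_ifs <;> first | rfl | omega | (congr 1; omega)
  · rw [Nat.dist_eq_sub_of_le h, if_pos (show (i : ℕ) ≤ j + 1 by omega), wsym,
      Nat.sub_add_comm h, add_comm]
    congr 1
    split_ifs <;> first | rfl | omega | (congr 1; omega)

namespace Matrix

open scoped ComplexOrder

variable {n : Type*} [Fintype n] [DecidableEq n]

theorem IsHermitian.posDef_of_sum_row_lt_diag {𝕜 : Type*} [RCLike 𝕜] {A : Matrix n n 𝕜}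
    (hA : A.IsHermitian) (h : ∀ k, ∑ j ∈ univ.erase k, ‖A k j‖ < RCLike.re (A k k)) :
    A.PosDef := by
  rw [hA.posDef_iff_eigenvalues_pos]
  intro i
  have hev : Module.End.HasEigenvalue (toLin' A) (hA.eigenvalues i : 𝕜) := by
    refine Module.End.hasEigenvalue_of_hasEigenvector (x := ⇑(hA.eigenvectorBasis i)) ⟨?_, ?_⟩
    · rw [Module.End.mem_eigenspace_iff, toLin'_apply, hA.mulVec_eigenvectorBasis,
        RCLike.real_smul_eq_coe_smul (K := 𝕜)]
    · simpa using hA.eigenvectorBasis.orthonormal.ne_zero i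
  obtain ⟨k, hk⟩ := eigenvalue_mem_ball hev
  rw [mem_closedBall_iff_norm'] at hk
  have hre : RCLike.re (A k k) - hA.eigenvalues i ≤ ‖A k k - hA.eigenvalues i‖ := by
    simpa using RCLike.re_le_norm (A k k - hA.eigenvalues i)
  linarith [h k]

theorem isUnit_of_posDef_add_conjTranspose {𝕜 : Type*} [RCLike 𝕜] {A : Matrix n n 𝕜}
    (h : (A + Aᴴ).PosDef) : IsUnit A := by
  rw [isUnit_iff_isUnit_det, isUnit_iff_ne_zero]
  intro hdet
  obtain ⟨v, hv, hAv⟩ := exists_mulVec_eq_zero_iff.mpr hdet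
  have hzero : star v ⬝ᵥ ((A + Aᴴ) *ᵥ v) = 0 := by
    rw [add_mulVec, dotProduct_add, hAv, dotProduct_mulVec, ← star_mulVec, hAv]
    simp
  exact (h.dotProduct_mulVec_pos hv).ne' hzero

theorem posDef_smul_one_sub_of_sum_row_nonpos {S : Matrix n n ℝ} (hS : S.IsSymm)
    (hoff : ∀ i j, i ≠ j → 0 ≤ S i j) (hrow : ∀ i, ∑ j, S i j ≤ 0) {c t : ℝ} (hc : 0 < c)
    (ht : 0 ≤ t) : (c • 1 - t • S).PosDef := by
  refine IsHermitian.posDef_of_sum_row_lt_diag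
    (isHermitian_iff_isSymm.mpr ((isSymm_one.smul c).sub (hS.smul t))) fun k => ?_
  have hoffdiag : ∑ j ∈ univ.erase k, ‖(c • 1 - t • S) k j‖ = t * (∑ j, S k j - S k k) := by
    rw [← sum_erase_eq_sub (mem_univ k), mul_sum]
    refine sum_congr rfl fun j hj => ?_
    rw [sub_apply, smul_apply, smul_apply, one_apply_ne (ne_of_mem_erase hj).symm, smul_zero,
      zero_sub, norm_neg, smul_eq_mul, Real.norm_eq_abs,
      abs_of_nonneg (mul_nonneg ht (hoff k j (ne_of_mem_erase hj).symm))]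
  rw [hoffdiag]
  simp only [sub_apply, smul_apply, one_apply_eq, smul_eq_mul, mul_one, RCLike.re_to_real]
  nlinarith [hrow k]

variable {R m : Type*} [CommRing R] [Fintype m] [LinearOrder m]

theorem det_of_blockLowerTriangular_prod {P : Matrix (m × n) (m × n) R} {A : Matrix n n R}
    (hlower : ∀ p q, p.1 < q.1 → P p q = 0) (hdiag : ∀ i j k, P (i, j) (i, k) = A j k) :
    P.det = A.det ^ Fintype.card m := by
  have htri : P.BlockTriangular (OrderDual.toDual ∘ Prod.fst) := fun p q hpq => hlower p q hpq
  rw [htri.det_fintype, ← OrderDual.toDual.prod_comp, ← card_univ, ← prod_const]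
  refine prod_congr rfl fun i _ => ?_
  let e : {p : m × n // OrderDual.toDual p.1 = OrderDual.toDual i} ≃ n :=
    { toFun := fun p => p.1.2
      invFun := fun j => ⟨(i, j), rfl⟩
      left_inv := fun p => Subtype.ext (Prod.ext p.2.symm rfl)
      right_inv := fun _ => rfl }
  have hblock : P.toSquareBlock (OrderDual.toDual ∘ Prod.fst) (OrderDual.toDual i)
      = A.submatrix e e := by
    ext ⟨⟨i₁, j⟩, hj⟩ ⟨⟨i₂, k⟩, hk⟩
    obtain rfl : i₁ = i := hj
    obtain rfl : i₂ = i₁ := hk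
    exact hdiag _ _ _
  rw [hblock, det_submatrix_equiv_self]

end Matrix

section Blocks

variable {β α h τ e1 e2 : ℝ}

lemma Gmat_add_transpose_nonneg_of_ne (hβ1 : 1 < β) (hβ2 : β < 2) {N : ℕ} {i j : Fin (N - 1)}
    (hij : i ≠ j) : 0 ≤ (Gmat β N + (Gmat β N)ᵀ) i j := by
  rw [Gmat_add_transpose_apply]
  have : (i : ℕ) ≠ j := Fin.val_ne_of_ne hij
  exact wsym_nonneg hβ1 hβ2 (by unfold Nat.dist; omega)

lemma sum_Gmat_add_transpose_row_nonpos (hβ1 : 1 < β) (hβ2 : β < 2) {N : ℕ} (i : Fin (N - 1)) :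
    ∑ j, (Gmat β N + (Gmat β N)ᵀ) i j ≤ 0 := by
  simp_rw [Gmat_add_transpose_apply]
  rw [Fin.sum_univ_eq_sum_range (fun j => wsym β (Nat.dist i j))]
  exact sum_range_wsym_natDist_nonpos hβ1 hβ2 i.isLt

lemma A0mat_add_conjTranspose (N : ℕ) :
    A0mat β α h τ e1 e2 N + (A0mat β α h τ e1 e2 N)ᴴ
      = (2 * (h ^ β * c0 α τ)) • 1 - ((1 - α / 2) * (e1 + e2)) • (Gmat β N + (Gmat β N)ᵀ) := by
  simp only [A0mat, Kmat, Matrix.conjTranspose_eq_transpose_of_trivial, Matrix.transpose_sub,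
    Matrix.transpose_smul, Matrix.transpose_one, Matrix.transpose_add, Matrix.transpose_transpose]
  module

lemma c0_pos (hα : α < 2) (hτ : 0 < τ) : 0 < c0 α τ := by
  unfold c0
  exact div_pos (mul_pos (Real.rpow_pos_of_pos hτ _) (Real.rpow_pos_of_pos (by linarith) _))
    (Real.Gamma_pos_of_pos (by linarith))

lemma isUnit_A0mat (hβ1 : 1 < β) (hβ2 : β < 2) (hα : α < 2) (hh : 0 < h) (hτ : 0 < τ)
    (he : 0 ≤ e1 + e2) (N : ℕ) : IsUnit (A0mat β α h τ e1 e2 N) := by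
  refine Matrix.isUnit_of_posDef_add_conjTranspose ?_
  rw [A0mat_add_conjTranspose]
  exact Matrix.posDef_smul_one_sub_of_sum_row_nonpos (Matrix.isSymm_add_transpose_self _)
    (fun _ _ => Gmat_add_transpose_nonneg_of_ne hβ1 hβ2)
    (sum_Gmat_add_transpose_row_nonpos hβ1 hβ2)
    (mul_pos two_pos (mul_pos (Real.rpow_pos_of_pos hh β) (c0_pos hα hτ)))
    (mul_nonneg (by linarith) he)

lemma det_PWmat (M N : ℕ) :
    (PWmat β α h τ e1 e2 M N).det = (A0mat β α h τ e1 e2 N).det ^ (M - 1) := by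
  rw [Matrix.det_of_blockLowerTriangular_prod (A := A0mat β α h τ e1 e2 N), Fintype.card_fin]
  · intro p q hpq
    have : (p.1 : ℕ) < q.1 := hpq
    simp only [PWmat, Matrix.of_apply]
    rw [if_neg (by omega), if_neg (by omega)]
  · intro i j k
    simp only [PWmat, Matrix.of_apply, if_true]

end Blocks

theorem PW_nonsingular_general (N M : ℕ)
    (β α h τ e1 e2 : ℝ) (hβ1 : 1 < β) (hβ2 : β < 2)
    (hα1 : α < 1) (hh : 0 < h) (hτ : 0 < τ)
    (he1 : 0 < e1) (he2 : 0 < e2) :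
    IsUnit (PWmat β α h τ e1 e2 M N) := by
  have hA0 := isUnit_A0mat hβ1 hβ2 (show α < 2 by linarith) hh hτ (show 0 ≤ e1 + e2 by linarith) N
  rw [Matrix.isUnit_iff_isUnit_det, det_PWmat]
  exact ((Matrix.isUnit_iff_isUnit_det _).mp hA0).pow _

theorem PW_nonsingular (N M : ℕ) (hN : 3 ≤ N) (hM : 3 ≤ M)
    (β α h τ e1 e2 : ℝ) (hβ1 : 1 < β) (hβ2 : β < 2)
    (hα0 : 0 < α) (hα1 : α < 1) (hh : 0 < h) (hτ : 0 < τ)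
    (he1 : 0 < e1) (he2 : 0 < e2) :
    IsUnit (PWmat β α h τ e1 e2 M N) :=
  PW_nonsingular_general N M β α h τ e1 e2 hβ1 hβ2 hα1 hh hτ he1 he2
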